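/- Let γ be a modular bridge from Ω_A to Ω_B. If ω, ω' ∈ M, l ≥ D_M(ω), l' ≥ D_M(ω'), η ∈ t_γ(ω|l), η' ∈ t_γ(ω'|l') and t ∈ ℝ, then η + tη' ∈ t_γ(ω + tω' | l + |t|·l'). -/

import Mathlib

open scoped ComplexOrder

noncomputable section

/-! ### Admissible functions -/

/-- A function `F : [0,∞)⁴ → [0,∞)` is admissible when it is nondecreasing in each argument
and dominates `x₁x₃ + x₂x₄`. -/
def Admissible (F : ℝ → ℝ → ℝ → ℝ → ℝ) : Prop :=
  (∀ x₁ x₂ x₃ x₄ y₁ y₂ y₃ y₄ : ℝ, 0 ≤ x₁ → 0 ≤ x₂ → 0 ≤ x₃ → 0 ≤ x₄ →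
      x₁ ≤ y₁ → x₂ ≤ y₂ → x₃ ≤ y₃ → x₄ ≤ y₄ → F x₁ x₂ x₃ x₄ ≤ F y₁ y₂ y₃ y₄) ∧
  (∀ x₁ x₂ x₃ x₄ : ℝ, 0 ≤ x₁ → 0 ≤ x₂ → 0 ≤ x₃ → 0 ≤ x₄ →
      x₁ * x₃ + x₂ * x₄ ≤ F x₁ x₂ x₃ x₄)

/-- An admissible triple `(F,G,H)`. -/
def AdmissibleTriple (F : ℝ → ℝ → ℝ → ℝ → ℝ) (G : ℝ → ℝ → ℝ → ℝ) (H : ℝ → ℝ → ℝ) : Prop :=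
  Admissible F ∧
  (∀ x y z x' y' z' : ℝ, 0 ≤ x → 0 ≤ y → 0 ≤ z → x ≤ x' → y ≤ y' → z ≤ z' →
      G x y z ≤ G x' y' z') ∧
  (∀ x y z : ℝ, 0 ≤ x → 0 ≤ y → 0 ≤ z → (x + y) * z ≤ G x y z) ∧
  (∀ x y x' y' : ℝ, 0 ≤ x → 0 ≤ y → x ≤ x' → y ≤ y' → H x y ≤ H x' y') ∧
  (∀ x y : ℝ, 0 ≤ x → 0 ≤ y → 2 * x * y ≤ H x y)

section ReIm

variable {A : Type*} [NormedRing A] [StarRing A] [NormedAlgebra ℂ A]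

/-- The real part `(a + a*)/2` of an element of a complex `*`-algebra. -/
def reEl (a : A) : A := (2⁻¹ : ℂ) • (a + star a)

/-- The imaginary part `(a - a*)/(2i)` of an element of a complex `*`-algebra. -/
def imEl (a : A) : A := ((2 * Complex.I)⁻¹ : ℂ) • (a - star a)

end ReIm

/-! ### States -/

/-- A state on a unital complex `*`-algebra: a linear functional which is unital
and positive. -/
structure CState (A : Type*) [NormedRing A] [StarRing A] [NormedAlgebra ℂ A] where
  toFun : A →ₗ[ℂ] ℂ
  map_one : toFun 1 = 1
  positive : ∀ a : A, 0 ≤ toFun (star a * a)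

/-- The topology induced by a distance function, generated by its open balls. -/
def ballTopology {X : Type*} (d : X → X → ℝ) : TopologicalSpace X :=
  TopologicalSpace.generateFrom {s | ∃ (x : X) (ε : ℝ), 0 < ε ∧ s = {y | d x y < ε}}

/-- The Hausdorff distance between two sets, relative to a distance function. -/
def hausDist {X : Type*} (d : X → X → ℝ) (S T : Set X) : ℝ :=
  max (sSup {r | ∃ x ∈ S, r = sInf {s | ∃ y ∈ T, s = d x y}})
      (sSup {r | ∃ y ∈ T, r = sInf {s | ∃ x ∈ S, s = d x y}})

/-- The diameter of a set relative to a distance function. -/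
def setDiam {X : Type*} (d : X → X → ℝ) (S : Set X) : ℝ :=
  sSup {r | ∃ x ∈ S, ∃ y ∈ S, r = d x y}

/-- The weak-* topology on the state space. -/
def stateWeakTopology (A : Type*) [NormedRing A] [StarRing A] [NormedAlgebra ℂ A] :
    TopologicalSpace (CState A) :=
  TopologicalSpace.induced (fun (φ : CState A) (a : A) => φ.toFun a) Pi.topologicalSpace

/-- The Monge-Kantorovich metric associated with a Lipschitz seminorm `L` with domain `dom`. -/
def mkDist {A : Type*} [NormedRing A] [StarRing A] [NormedAlgebra ℂ A]
    (dom : Set A) (L : A → ℝ) (φ ψ : CState A) : ℝ :=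
  sSup {r | ∃ a ∈ dom, L a ≤ 1 ∧ r = ‖φ.toFun a - ψ.toFun a‖}

/-- The 1-level set of a pivot is nonempty. -/
def pivotLevelNonempty {D : Type*} [NormedRing D] [StarRing D] [NormedAlgebra ℂ D]
    (x : D) : Prop :=
  ∃ φ : CState D,
    φ.toFun (star (1 - x) * (1 - x)) = 0 ∧ φ.toFun ((1 - x) * star (1 - x)) = 0

/-! ### Quasi-Leibniz quantum compact metric spaces -/

/-- An `F`-quasi-Leibniz quantum compact metric space structure on a unital C*-algebra `A`:
a Lipschitz seminorm `L` defined on a dense Jordan-Lie subalgebra `dom` of the self-adjoint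
part of `A`, vanishing exactly on `ℝ1`, lower semicontinuous, whose Monge-Kantorovich metric
metrizes the weak-* topology on the state space, and satisfying the `F`-quasi-Leibniz
inequality. -/
structure QLSpace (A : Type*) [NormedRing A] [StarRing A] [CStarRing A]
    [NormedAlgebra ℂ A] [StarModule ℂ A] [CompleteSpace A]
    (F : ℝ → ℝ → ℝ → ℝ → ℝ) where
  dom : Set A
  L : A → ℝ
  dom_selfAdjoint : ∀ a ∈ dom, IsSelfAdjoint a
  dom_dense : closure dom = {a : A | IsSelfAdjoint a}
  dom_add : ∀ a ∈ dom, ∀ b ∈ dom, a + b ∈ dom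
  dom_smul : ∀ (t : ℝ), ∀ a ∈ dom, (t : ℂ) • a ∈ dom
  dom_jordan : ∀ a ∈ dom, ∀ b ∈ dom, (2⁻¹ : ℂ) • (a * b + b * a) ∈ dom
  dom_lie : ∀ a ∈ dom, ∀ b ∈ dom, ((2 * Complex.I)⁻¹ : ℂ) • (a * b - b * a) ∈ dom
  one_mem : (1 : A) ∈ dom
  L_nonneg : ∀ a : A, 0 ≤ L a
  L_add : ∀ a ∈ dom, ∀ b ∈ dom, L (a + b) ≤ L a + L b
  L_smul : ∀ (t : ℝ), ∀ a ∈ dom, L ((t : ℂ) • a) = |t| * L a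
  L_eq_zero_iff : ∀ a ∈ dom, (L a = 0 ↔ ∃ t : ℝ, a = (t : ℂ) • (1 : A))
  lowerSemicontinuous : IsClosed {a : A | a ∈ dom ∧ L a ≤ 1}
  leibniz_jordan : ∀ a ∈ dom, ∀ b ∈ dom,
      L ((2⁻¹ : ℂ) • (a * b + b * a)) ≤ F ‖a‖ ‖b‖ (L a) (L b)
  leibniz_lie : ∀ a ∈ dom, ∀ b ∈ dom,
      L (((2 * Complex.I)⁻¹ : ℂ) • (a * b - b * a)) ≤ F ‖a‖ ‖b‖ (L a) (L b)
  mk_metrizes : ballTopology (mkDist dom L) = stateWeakTopology A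
/-! ### Metrized quantum vector bundles -/

/-- An `(F,G,H)`-metrized quantum vector bundle: a left Hilbert module `M` over a unital
C*-algebra `A` equipped with an `F`-quasi-Leibniz quantum compact metric space structure,
together with a D-norm `D` defined on a dense subspace `Ddom` of `M`, dominating the
C*-Hilbert norm, with compact unit ball, and satisfying the inner and modular quasi-Leibniz
inequalities with respect to `G` and `H`. -/
structure BundledMQVB (F : ℝ → ℝ → ℝ → ℝ → ℝ) (G : ℝ → ℝ → ℝ → ℝ) (H : ℝ → ℝ → ℝ) where
  A : Type
  [instRing : NormedRing A]
  [instStarRing : StarRing A]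
  [instCStar : CStarRing A]
  [instAlg : NormedAlgebra ℂ A]
  [instStarMod : StarModule ℂ A]
  [instComplete : CompleteSpace A]
  M : Type
  [instM : NormedAddCommGroup M]
  [instMC : Module ℂ M]
  [instMA : Module A M]
  [instTower : IsScalarTower ℂ A M]
  [instMComplete : CompleteSpace M]
  base : QLSpace A F
  inn : M → M → A
  Ddom : Set M
  D : M → ℝ
  inn_add_left : ∀ x y z : M, inn (x + y) z = inn x z + inn y z
  inn_smul_left : ∀ (a : A) (x y : M), inn (a • x) y = a * inn x y
  inn_smul_leftC : ∀ (c : ℂ) (x y : M), inn (c • x) y = c • inn x y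
  inn_star : ∀ x y : M, star (inn x y) = inn y x
  inn_pos : ∀ x : M, ∃ b : A, inn x x = star b * b
  inn_definite : ∀ x : M, inn x x = 0 → x = 0
  norm_eq : ∀ x : M, ‖x‖ = Real.sqrt ‖inn x x‖
  Ddom_dense : Dense Ddom
  Ddom_add : ∀ x ∈ Ddom, ∀ y ∈ Ddom, x + y ∈ Ddom
  Ddom_smul : ∀ (c : ℂ), ∀ x ∈ Ddom, c • x ∈ Ddom
  D_nonneg : ∀ x : M, 0 ≤ D x
  D_add : ∀ x ∈ Ddom, ∀ y ∈ Ddom, D (x + y) ≤ D x + D y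
  D_smul : ∀ (c : ℂ), ∀ x ∈ Ddom, D (c • x) = ‖c‖ * D x
  norm_le_D : ∀ x ∈ Ddom, ‖x‖ ≤ D x
  D_ball_compact : IsCompact {x : M | x ∈ Ddom ∧ D x ≤ 1}
  D_leibniz : ∀ a ∈ base.dom, ∀ x ∈ Ddom,
      a • x ∈ Ddom ∧ D (a • x) ≤ G ‖a‖ (base.L a) (D x)
  inn_leibniz : ∀ x ∈ Ddom, ∀ y ∈ Ddom,
      reEl (inn x y) ∈ base.dom ∧ imEl (inn x y) ∈ base.dom ∧
      base.L (reEl (inn x y)) ≤ H (D x) (D y) ∧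
      base.L (imEl (inn x y)) ≤ H (D x) (D y)

attribute [instance] BundledMQVB.instRing BundledMQVB.instStarRing BundledMQVB.instCStar
  BundledMQVB.instAlg BundledMQVB.instStarMod BundledMQVB.instComplete
  BundledMQVB.instM BundledMQVB.instMC BundledMQVB.instMA BundledMQVB.instTower
  BundledMQVB.instMComplete

variable {F : ℝ → ℝ → ℝ → ℝ → ℝ} {G : ℝ → ℝ → ℝ → ℝ} {H : ℝ → ℝ → ℝ}

/-- The closed ball of radius `r` for the D-norm of a metrized quantum vector bundle. -/
def BundledMQVB.Dball (Ω : BundledMQVB F G H) (r : ℝ) : Set Ω.M :=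
  {ω | ω ∈ Ω.Ddom ∧ Ω.D ω ≤ r}

/-- The modular Monge-Kantorovich metric of a metrized quantum vector bundle. -/
def BundledMQVB.mkD (Ω : BundledMQVB F G H) (x y : Ω.M) : ℝ :=
  sSup {r | ∃ ξ ∈ Ω.Ddom, Ω.D ξ ≤ 1 ∧ r = ‖Ω.inn x ξ - Ω.inn y ξ‖}

/-- The `A`-weak topology on the module of a metrized quantum vector bundle. -/
def BundledMQVB.aWeak (Ω : BundledMQVB F G H) : TopologicalSpace Ω.M :=
  TopologicalSpace.induced (fun (ω : Ω.M) (ξ : Ω.M) => Ω.inn ω ξ) Pi.topologicalSpace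
/-! ### Modular bridges -/

/-- A modular bridge between two metrized quantum vector bundles. -/
structure ModularBridge (ΩA ΩB : BundledMQVB F G H) where
  Dalg : Type
  [instDRing : NormedRing Dalg]
  [instDStarRing : StarRing Dalg]
  [instDCStar : CStarRing Dalg]
  [instDAlg : NormedAlgebra ℂ Dalg]
  [instDStarMod : StarModule ℂ Dalg]
  [instDComplete : CompleteSpace Dalg]
  J : Type
  [instJ : Nonempty J]
  pivot : Dalg
  piA : ΩA.A →⋆ₐ[ℂ] Dalg
  piB : ΩB.A →⋆ₐ[ℂ] Dalg
  piA_inj : Function.Injective piA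
  piB_inj : Function.Injective piB
  pivot_norm : ‖pivot‖ = 1
  levelSet_nonempty : pivotLevelNonempty pivot
  anchors : J → ΩA.M
  coanchors : J → ΩB.M
  anchors_mem : ∀ j, anchors j ∈ ΩA.Ddom
  anchors_le : ∀ j, ΩA.D (anchors j) ≤ 1
  coanchors_mem : ∀ j, coanchors j ∈ ΩB.Ddom
  coanchors_le : ∀ j, ΩB.D (coanchors j) ≤ 1

attribute [instance] ModularBridge.instDRing ModularBridge.instDStarRing
  ModularBridge.instDCStar ModularBridge.instDAlg ModularBridge.instDStarMod
  ModularBridge.instDComplete ModularBridge.instJ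

namespace ModularBridge

variable {ΩA ΩB : BundledMQVB F G H}

/-- The bridge seminorm of a modular bridge. -/
def bn (γ : ModularBridge ΩA ΩB) (a : ΩA.A) (b : ΩB.A) : ℝ :=
  ‖γ.piA a * γ.pivot - γ.pivot * γ.piB b‖

/-- The deck seminorm of a modular bridge. -/
def dn (γ : ModularBridge ΩA ΩB) (ω : ΩA.M) (η : ΩB.M) : ℝ :=
  ⨆ k : γ.J,
    max (γ.bn (ΩA.inn ω (γ.anchors k)) (ΩB.inn η (γ.coanchors k)))
        (γ.bn (ΩA.inn (γ.anchors k) ω) (ΩB.inn (γ.coanchors k) η))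

/-- The basic reach of a modular bridge. -/
def basicReach (γ : ModularBridge ΩA ΩB) : ℝ :=
  max
    (sSup {r | ∃ a ∈ ΩA.base.dom, ΩA.base.L a ≤ 1 ∧
        r = sInf {s | ∃ b ∈ ΩB.base.dom, ΩB.base.L b ≤ 1 ∧ s = γ.bn a b}})
    (sSup {r | ∃ b ∈ ΩB.base.dom, ΩB.base.L b ≤ 1 ∧
        r = sInf {s | ∃ a ∈ ΩA.base.dom, ΩA.base.L a ≤ 1 ∧ s = γ.bn a b}})

/-- The modular reach of a modular bridge. -/
def modularReach (γ : ModularBridge ΩA ΩB) : ℝ :=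
  ⨆ j : γ.J, γ.dn (γ.anchors j) (γ.coanchors j)

/-- The imprint of a modular bridge. -/
def imprint (γ : ModularBridge ΩA ΩB) : ℝ :=
  max (hausDist ΩA.mkD (Set.range γ.anchors) (ΩA.Dball 1))
      (hausDist ΩB.mkD (Set.range γ.coanchors) (ΩB.Dball 1))

/-- The reach of a modular bridge. -/
def reach (γ : ModularBridge ΩA ΩB) : ℝ :=
  max γ.basicReach (γ.modularReach + γ.imprint)

/-- The states of the bridge algebra in the 1-level set of the pivot. -/
def levelStates (γ : ModularBridge ΩA ΩB) : Set (CState γ.Dalg) :=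
  {φ | φ.toFun (star (1 - γ.pivot) * (1 - γ.pivot)) = 0 ∧
       φ.toFun ((1 - γ.pivot) * star (1 - γ.pivot)) = 0}

/-- The height of a modular bridge. -/
def height (γ : ModularBridge ΩA ΩB) : ℝ :=
  max
    (hausDist (mkDist ΩA.base.dom ΩA.base.L) (Set.univ : Set (CState ΩA.A))
      {ψ | ∃ φ ∈ γ.levelStates, ∀ a : ΩA.A, ψ.toFun a = φ.toFun (γ.piA a)})
    (hausDist (mkDist ΩB.base.dom ΩB.base.L) (Set.univ : Set (CState ΩB.A))
      {ψ | ∃ φ ∈ γ.levelStates, ∀ b : ΩB.A, ψ.toFun b = φ.toFun (γ.piB b)})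

/-- The length of a modular bridge. -/
def length (γ : ModularBridge ΩA ΩB) : ℝ := max γ.reach γ.height

/-- The `l`-modular target set of `ω` for a modular bridge. -/
def mtarget (γ : ModularBridge ΩA ΩB) (ω : ΩA.M) (l : ℝ) : Set ΩB.M :=
  {η | η ∈ ΩB.Ddom ∧ ΩB.D η ≤ l ∧ γ.dn ω η ≤ l * γ.reach}

/-- The `l`-target set of `a` for a modular bridge. -/
def atarget (γ : ModularBridge ΩA ΩB) (a : ΩA.A) (l : ℝ) : Set ΩB.A :=
  {b | b ∈ ΩB.base.dom ∧ ΩB.base.L b ≤ l ∧ γ.bn a b ≤ l * γ.basicReach}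

/-- The reverse of a modular bridge. -/
def reverse (γ : ModularBridge ΩA ΩB) : ModularBridge ΩB ΩA where
  Dalg := γ.Dalg
  J := γ.J
  pivot := star γ.pivot
  piA := γ.piB
  piB := γ.piA
  piA_inj := γ.piB_inj
  piB_inj := γ.piA_inj
  pivot_norm := by rw [norm_star]; exact γ.pivot_norm
  levelSet_nonempty := by
    obtain ⟨φ, h1, h2⟩ := γ.levelSet_nonempty
    refine ⟨φ, ?_, ?_⟩
    · have e1 : star ((1 : γ.Dalg) - star γ.pivot) = 1 - γ.pivot := by
        simp [star_sub]
      have e2 : (1 : γ.Dalg) - star γ.pivot = star (1 - γ.pivot) := by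
        simp [star_sub]
      rw [e1, e2]; exact h2
    · have e1 : star ((1 : γ.Dalg) - star γ.pivot) = 1 - γ.pivot := by
        simp [star_sub]
      have e2 : (1 : γ.Dalg) - star γ.pivot = star (1 - γ.pivot) := by
        simp [star_sub]
      rw [e1, e2]; exact h1
  anchors := γ.coanchors
  coanchors := γ.anchors
  anchors_mem := γ.coanchors_mem
  anchors_le := γ.coanchors_le
  coanchors_mem := γ.anchors_mem
  coanchors_le := γ.anchors_le

end ModularBridge

/-! ### Modular treks -/

/-- A modular trek: a finite chain of composable modular bridges. -/
inductive Trek (F : ℝ → ℝ → ℝ → ℝ → ℝ) (G : ℝ → ℝ → ℝ → ℝ) (H : ℝ → ℝ → ℝ) :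
    BundledMQVB F G H → BundledMQVB F G H → Type 1
  | single {ΩA ΩB : BundledMQVB F G H} (γ : ModularBridge ΩA ΩB) : Trek F G H ΩA ΩB
  | cons {ΩA ΩB ΩC : BundledMQVB F G H} (γ : ModularBridge ΩA ΩB)
      (Γ : Trek F G H ΩB ΩC) : Trek F G H ΩA ΩC

namespace Trek

/-- The length of a modular trek: the sum of the lengths of its bridges. -/
def length : ∀ {ΩA ΩB : BundledMQVB F G H}, Trek F G H ΩA ΩB → ℝ
  | _, _, .single γ => γ.length
  | _, _, .cons γ Γ => γ.length + Trek.length Γ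

/-- The modular target set of a modular trek (the set of endpoints of `l`-itineraries). -/
def mtarget : ∀ {ΩA ΩB : BundledMQVB F G H}, Trek F G H ΩA ΩB → ΩA.M → ℝ → Set ΩB.M
  | _, _, .single γ, ω, l => γ.mtarget ω l
  | _, _, .cons γ Γ, ω, l => {η | ∃ ξ ∈ γ.mtarget ω l, η ∈ Trek.mtarget Γ ξ l}

/-- The target set of a modular trek on the base algebras. -/
def atarget : ∀ {ΩA ΩB : BundledMQVB F G H}, Trek F G H ΩA ΩB → ΩA.A → ℝ → Set ΩB.A
  | _, _, .single γ, a, l => γ.atarget a l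
  | _, _, .cons γ Γ, a, l => {b | ∃ c ∈ γ.atarget a l, b ∈ Trek.atarget Γ c l}

end Trek

/-! ### Auxiliary lemmas for statement 8 -/

/-- Bundle the unbundled C*-algebra hypotheses into a `CStarAlgebra` structure. -/
@[reducible]
noncomputable def mkCStarAlgebra (A : Type*) [NormedRing A] [StarRing A] [CStarRing A]
    [NormedAlgebra ℂ A] [StarModule ℂ A] [CompleteSpace A] : CStarAlgebra A :=
  { ‹NormedRing A›, ‹StarRing A›, ‹CStarRing A›, ‹NormedAlgebra ℂ A›, ‹StarModule ℂ A›,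
    ‹CompleteSpace A› with }

namespace BundledMQVB

variable {F : ℝ → ℝ → ℝ → ℝ → ℝ} {G : ℝ → ℝ → ℝ → ℝ} {H : ℝ → ℝ → ℝ}
variable (Ω : BundledMQVB F G H)

lemma inn_neg_left (x y : Ω.M) : Ω.inn (-x) y = -Ω.inn x y := by
  rw [← neg_one_smul ℂ x, Ω.inn_smul_leftC]
  simp

lemma inn_sub_left (x y z : Ω.M) : Ω.inn (x - y) z = Ω.inn x z - Ω.inn y z := by
  rw [sub_eq_add_neg, Ω.inn_add_left, Ω.inn_neg_left, ← sub_eq_add_neg]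

lemma inn_add_right (x y z : Ω.M) : Ω.inn x (y + z) = Ω.inn x y + Ω.inn x z := by
  rw [← Ω.inn_star, Ω.inn_add_left, star_add, Ω.inn_star, Ω.inn_star]

lemma inn_sub_right (x y z : Ω.M) : Ω.inn x (y - z) = Ω.inn x y - Ω.inn x z := by
  rw [← Ω.inn_star, Ω.inn_sub_left, star_sub, Ω.inn_star, Ω.inn_star]

lemma inn_smul_right (a : Ω.A) (x y : Ω.M) : Ω.inn x (a • y) = Ω.inn x y * star a := by
  rw [← Ω.inn_star, Ω.inn_smul_left, star_mul, Ω.inn_star]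

lemma inn_smul_rightC (c : ℂ) (x y : Ω.M) : Ω.inn x (c • y) = (star c) • Ω.inn x y := by
  rw [← Ω.inn_star, Ω.inn_smul_leftC, star_smul, Ω.inn_star]

lemma norm_inn_sq (x : Ω.M) : ‖Ω.inn x x‖ = ‖x‖ ^ 2 := by
  rw [Ω.norm_eq x, sq, Real.mul_self_sqrt (norm_nonneg _)]

/-- Cauchy-Schwarz-type estimate: if `‖y‖ ≤ 1` then `‖⟨x,y⟩‖ ≤ ‖x‖`. -/
lemma norm_inn_le (x y : Ω.M) (hy : ‖y‖ ≤ 1) : ‖Ω.inn x y‖ ≤ ‖x‖ := by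
  letI : CStarAlgebra Ω.A := mkCStarAlgebra Ω.A
  letI : PartialOrder Ω.A := CStarAlgebra.spectralOrder Ω.A
  haveI : StarOrderedRing Ω.A := CStarAlgebra.spectralOrderedRing Ω.A
  set a := Ω.inn x y with ha
  have hyy : ‖Ω.inn y y‖ ≤ 1 := by
    have h1 : ‖y‖ = Real.sqrt ‖Ω.inn y y‖ := Ω.norm_eq y
    nlinarith [Real.sq_sqrt (norm_nonneg (Ω.inn y y)), Real.sqrt_nonneg ‖Ω.inn y y‖]
  have hP : (0 : Ω.A) ≤ Ω.inn (x - a • y) (x - a • y) := by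
    obtain ⟨b, hb⟩ := Ω.inn_pos (x - a • y)
    rw [hb]; exact star_mul_self_nonneg b
  have hyx : Ω.inn y x = star a := by rw [ha, Ω.inn_star]
  have hexp : Ω.inn (x - a • y) (x - a • y)
      = Ω.inn x x - a * star a - a * star a + a * (Ω.inn y y * star a) := by
    simp only [Ω.inn_sub_right, Ω.inn_sub_left, Ω.inn_smul_right, Ω.inn_smul_left, hyx, ← ha,
      mul_assoc]
    abel
  have key : a * star a + a * star a ≤ Ω.inn x x + a * (Ω.inn y y * star a) := by
    rw [← sub_nonneg]
    have : Ω.inn x x + a * (Ω.inn y y * star a) - (a * star a + a * star a)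
        = Ω.inn x x - a * star a - a * star a + a * (Ω.inn y y * star a) := by abel
    rw [this, ← hexp]; exact hP
  have haa : (0 : Ω.A) ≤ a * star a := by
    have := star_mul_self_nonneg (star a)
    rwa [star_star] at this
  have h1 : ‖a * star a + a * star a‖ ≤ ‖Ω.inn x x + a * (Ω.inn y y * star a)‖ :=
    CStarAlgebra.norm_le_norm_of_nonneg_of_le (add_nonneg haa haa) key
  have h2 : ‖a * star a + a * star a‖ = 2 * ‖a * star a‖ := by
    rw [← two_smul ℝ (a * star a), norm_smul]
    simp
  have h3 : ‖Ω.inn x x + a * (Ω.inn y y * star a)‖ ≤ ‖x‖ ^ 2 + ‖a‖ * ‖a‖ := by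
    refine (norm_add_le _ _).trans ?_
    have h4 : ‖a * (Ω.inn y y * star a)‖ ≤ ‖a‖ * ‖a‖ := by
      calc ‖a * (Ω.inn y y * star a)‖ ≤ ‖a‖ * ‖Ω.inn y y * star a‖ := norm_mul_le _ _
        _ ≤ ‖a‖ * (‖Ω.inn y y‖ * ‖star a‖) := by
            exact mul_le_mul_of_nonneg_left (norm_mul_le _ _) (norm_nonneg _)
        _ ≤ ‖a‖ * (1 * ‖a‖) := by
            rw [norm_star]
            exact mul_le_mul_of_nonneg_left
              (mul_le_mul_of_nonneg_right hyy (norm_nonneg _)) (norm_nonneg _)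
        _ = ‖a‖ * ‖a‖ := by ring
    rw [Ω.norm_inn_sq]
    exact add_le_add le_rfl h4
  have h5 : ‖a * star a‖ = ‖a‖ * ‖a‖ := CStarRing.norm_self_mul_star
  have h6 : 2 * (‖a‖ * ‖a‖) ≤ ‖x‖ ^ 2 + ‖a‖ * ‖a‖ := by
    have h7 := h1.trans h3
    rw [h2, h5] at h7
    linarith
  nlinarith [norm_nonneg a, norm_nonneg x, h6, sq_nonneg (‖a‖ - ‖x‖), sq_nonneg (‖a‖ + ‖x‖)]

end BundledMQVB

namespace ModularBridge

variable {F : ℝ → ℝ → ℝ → ℝ → ℝ} {G : ℝ → ℝ → ℝ → ℝ} {H : ℝ → ℝ → ℝ}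
variable {ΩA ΩB : BundledMQVB F G H}

lemma bn_nonneg (γ : ModularBridge ΩA ΩB) (a : ΩA.A) (b : ΩB.A) : 0 ≤ γ.bn a b :=
  norm_nonneg _

lemma bn_add_smul_le (γ : ModularBridge ΩA ΩB) (a a' : ΩA.A) (b b' : ΩB.A) (t : ℝ) :
    γ.bn (a + (t : ℂ) • a') (b + (t : ℂ) • b') ≤ γ.bn a b + |t| * γ.bn a' b' := by
  unfold ModularBridge.bn
  rw [map_add, map_add, map_smul, map_smul]
  have e : (γ.piA a + (t : ℂ) • γ.piA a') * γ.pivot - γ.pivot * (γ.piB b + (t : ℂ) • γ.piB b')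
      = (γ.piA a * γ.pivot - γ.pivot * γ.piB b)
        + (t : ℂ) • (γ.piA a' * γ.pivot - γ.pivot * γ.piB b') := by
    rw [add_mul, mul_add, smul_mul_assoc, mul_smul_comm, smul_sub]
    abel
  rw [e]
  refine (norm_add_le _ _).trans ?_
  rw [norm_smul, Complex.norm_real, Real.norm_eq_abs]

/-- The bridge seminorm is bounded by the sum of the norms. -/
lemma bn_le_norm (γ : ModularBridge ΩA ΩB) (a : ΩA.A) (b : ΩB.A) :
    γ.bn a b ≤ ‖a‖ + ‖b‖ := by
  letI : CStarAlgebra ΩA.A := mkCStarAlgebra ΩA.A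
  letI : CStarAlgebra ΩB.A := mkCStarAlgebra ΩB.A
  letI : CStarAlgebra γ.Dalg := mkCStarAlgebra γ.Dalg
  refine (norm_sub_le _ _).trans (add_le_add ?_ ?_)
  · calc ‖γ.piA a * γ.pivot‖ ≤ ‖γ.piA a‖ * ‖γ.pivot‖ := norm_mul_le _ _
      _ = ‖γ.piA a‖ := by rw [γ.pivot_norm, mul_one]
      _ ≤ ‖a‖ := NonUnitalStarAlgHom.norm_apply_le γ.piA a
  · calc ‖γ.pivot * γ.piB b‖ ≤ ‖γ.pivot‖ * ‖γ.piB b‖ := norm_mul_le _ _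
      _ = ‖γ.piB b‖ := by rw [γ.pivot_norm, one_mul]
      _ ≤ ‖b‖ := NonUnitalStarAlgHom.norm_apply_le γ.piB b

end ModularBridge

/-- target sets of modular bridges are compatible with the linear structure:
if `η ∈ t_γ(ω|l)`, `η' ∈ t_γ(ω'|l')` and `t ∈ ℝ`, then
`η + tη' ∈ t_γ(ω + tω' | l + |t|l')`. -/
theorem statement8 {F : ℝ → ℝ → ℝ → ℝ → ℝ} {G : ℝ → ℝ → ℝ → ℝ} {H : ℝ → ℝ → ℝ}
    (hFGH : AdmissibleTriple F G H)
    {ΩA ΩB : BundledMQVB F G H} (γ : ModularBridge ΩA ΩB)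
    (ω ω' : ΩA.M) (hω : ω ∈ ΩA.Ddom) (hω' : ω' ∈ ΩA.Ddom)
    (l l' : ℝ) (hl : ΩA.D ω ≤ l) (hl' : ΩA.D ω' ≤ l')
    (η η' : ΩB.M) (hη : η ∈ γ.mtarget ω l) (hη' : η' ∈ γ.mtarget ω' l') (t : ℝ) :
    η + (t : ℂ) • η' ∈ γ.mtarget (ω + (t : ℂ) • ω') (l + |t| * l') := by
  obtain ⟨hηD, hηl, hηdn⟩ := hη
  obtain ⟨hη'D, hη'l, hη'dn⟩ := hη'
  have htη' : (t : ℂ) • η' ∈ ΩB.Ddom := ΩB.Ddom_smul _ η' hη'D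
  refine ⟨ΩB.Ddom_add η hηD _ htη', ?_, ?_⟩
  · calc ΩB.D (η + (t : ℂ) • η') ≤ ΩB.D η + ΩB.D ((t : ℂ) • η') := ΩB.D_add η hηD _ htη'
      _ = ΩB.D η + |t| * ΩB.D η' := by
          rw [ΩB.D_smul _ η' hη'D, Complex.norm_real, Real.norm_eq_abs]
      _ ≤ l + |t| * l' := add_le_add hηl (mul_le_mul_of_nonneg_left hη'l (abs_nonneg t))
  · set f : γ.J → ℝ := fun k =>
      max (γ.bn (ΩA.inn ω (γ.anchors k)) (ΩB.inn η (γ.coanchors k)))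
          (γ.bn (ΩA.inn (γ.anchors k) ω) (ΩB.inn (γ.coanchors k) η)) with hf
    set g : γ.J → ℝ := fun k =>
      max (γ.bn (ΩA.inn ω' (γ.anchors k)) (ΩB.inn η' (γ.coanchors k)))
          (γ.bn (ΩA.inn (γ.anchors k) ω') (ΩB.inn (γ.coanchors k) η')) with hg
    have hanch : ∀ k, ‖γ.anchors k‖ ≤ 1 :=
      fun k => (ΩA.norm_le_D _ (γ.anchors_mem k)).trans (γ.anchors_le k)
    have hcoanch : ∀ k, ‖γ.coanchors k‖ ≤ 1 :=
      fun k => (ΩB.norm_le_D _ (γ.coanchors_mem k)).trans (γ.coanchors_le k)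
    have hbound : ∀ (ξ : ΩA.M) (ζ : ΩB.M) (k : γ.J),
        max (γ.bn (ΩA.inn ξ (γ.anchors k)) (ΩB.inn ζ (γ.coanchors k)))
            (γ.bn (ΩA.inn (γ.anchors k) ξ) (ΩB.inn (γ.coanchors k) ζ)) ≤ ‖ξ‖ + ‖ζ‖ := by
      intro ξ ζ k
      have n1 : ‖ΩA.inn ξ (γ.anchors k)‖ ≤ ‖ξ‖ := ΩA.norm_inn_le _ _ (hanch k)
      have n2 : ‖ΩB.inn ζ (γ.coanchors k)‖ ≤ ‖ζ‖ := ΩB.norm_inn_le _ _ (hcoanch k)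
      have n3 : ‖ΩA.inn (γ.anchors k) ξ‖ ≤ ‖ξ‖ := by
        rw [← ΩA.inn_star, norm_star]; exact n1
      have n4 : ‖ΩB.inn (γ.coanchors k) ζ‖ ≤ ‖ζ‖ := by
        rw [← ΩB.inn_star, norm_star]; exact n2
      exact max_le ((γ.bn_le_norm _ _).trans (add_le_add n1 n2))
        ((γ.bn_le_norm _ _).trans (add_le_add n3 n4))
    have hbddf : BddAbove (Set.range f) := by
      refine ⟨‖ω‖ + ‖η‖, ?_⟩
      rintro r ⟨k, rfl⟩
      exact hbound ω η k
    have hbddg : BddAbove (Set.range g) := by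
      refine ⟨‖ω'‖ + ‖η'‖, ?_⟩
      rintro r ⟨k, rfl⟩
      exact hbound ω' η' k
    have hfd : ∀ k, f k ≤ l * γ.reach := fun k => (le_ciSup hbddf k).trans hηdn
    have hgd : ∀ k, g k ≤ l' * γ.reach := fun k => (le_ciSup hbddg k).trans hη'dn
    refine ciSup_le fun k => ?_
    have e1 : ΩA.inn (ω + (t : ℂ) • ω') (γ.anchors k)
        = ΩA.inn ω (γ.anchors k) + (t : ℂ) • ΩA.inn ω' (γ.anchors k) := by
      rw [ΩA.inn_add_left, ΩA.inn_smul_leftC]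
    have e2 : ΩB.inn (η + (t : ℂ) • η') (γ.coanchors k)
        = ΩB.inn η (γ.coanchors k) + (t : ℂ) • ΩB.inn η' (γ.coanchors k) := by
      rw [ΩB.inn_add_left, ΩB.inn_smul_leftC]
    have e3 : ΩA.inn (γ.anchors k) (ω + (t : ℂ) • ω')
        = ΩA.inn (γ.anchors k) ω + (t : ℂ) • ΩA.inn (γ.anchors k) ω' := by
      rw [ΩA.inn_add_right, ΩA.inn_smul_rightC, Complex.star_def, Complex.conj_ofReal]
    have e4 : ΩB.inn (γ.coanchors k) (η + (t : ℂ) • η')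
        = ΩB.inn (γ.coanchors k) η + (t : ℂ) • ΩB.inn (γ.coanchors k) η' := by
      rw [ΩB.inn_add_right, ΩB.inn_smul_rightC, Complex.star_def, Complex.conj_ofReal]
    have c1 : γ.bn (ΩA.inn (ω + (t : ℂ) • ω') (γ.anchors k))
          (ΩB.inn (η + (t : ℂ) • η') (γ.coanchors k)) ≤ f k + |t| * g k := by
      rw [e1, e2]
      refine (γ.bn_add_smul_le _ _ _ _ t).trans (add_le_add (le_max_left _ _) ?_)
      exact mul_le_mul_of_nonneg_left (le_max_left _ _) (abs_nonneg t)
    have c2 : γ.bn (ΩA.inn (γ.anchors k) (ω + (t : ℂ) • ω'))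
          (ΩB.inn (γ.coanchors k) (η + (t : ℂ) • η')) ≤ f k + |t| * g k := by
      rw [e3, e4]
      refine (γ.bn_add_smul_le _ _ _ _ t).trans (add_le_add (le_max_right _ _) ?_)
      exact mul_le_mul_of_nonneg_left (le_max_right _ _) (abs_nonneg t)
    have : f k + |t| * g k ≤ (l + |t| * l') * γ.reach := by
      have := mul_le_mul_of_nonneg_left (hgd k) (abs_nonneg t)
      have := hfd k
      nlinarith
    exact max_le (c1.trans this) (c2.trans this)
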